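/- arXiv:1704.00652 — 5 statements merged into one kernel-verified Lean document; each statement's English description precedes it below -/
import Mathlib

section
/- Let G be a finite simple graph, let k ≥ 1, and let H be a subgroup of the automorphism group of G. Suppose c₁ and c₂ are proper k-colorings of G with c₂ = σ ∘ c₁ ∘ φ for some permutation σ of {1,…,k} and some φ ∈ H. Let Q be a partition of V(G) into independent sets and let [Q]_H = { ψ(Q) : ψ ∈ H } be its H-orbit, where ψ(Q) is the partition whose blocks are the ψ-images of the blocks of Q. Then the number of proper k-colorings of G □ P₂ whose layer-1 coloring equals c₁ and whose layer-2 kernel partition lies in [Q]_H equals the number of proper k-colorings of G □ P₂ whose layer-1 coloring equals c₂ and whose layer-2 kernel partition lies in [Q]_H. -/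
/-! Relabelling the colours by `σ` and precomposing with the automorphism `φ × id` of `G □ P₂`
is a bijection on colourings of `G □ P₂`. It keeps colourings proper, turns the layer-1
colouring `c₁` into `c₂ = σ ∘ c₁ ∘ φ`, and replaces a layer-2 kernel partition `ψ⁻¹(Q)` by
`(ψφ)⁻¹(Q)`, which stays in the `H`-orbit of `Q` because `φ ∈ H`. -/

open SimpleGraph

theorem Setoid.ker_comp_of_injective {α β γ : Type*} {g : β → γ} (hg : Function.Injective g)
    (f : α → β) : Setoid.ker (g ∘ f) = Setoid.ker f := by
  ext x y
  simp only [Setoid.ker_def, Function.comp_apply, hg.eq_iff]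

namespace SimpleGraph

def Iso.boxProdCongr {V V' W W' : Type*} {G : SimpleGraph V} {G' : SimpleGraph V'}
    {K : SimpleGraph W} {K' : SimpleGraph W'} (φ : G ≃g G') (ψ : K ≃g K') :
    G.boxProd K ≃g G'.boxProd K' where
  toEquiv := φ.toEquiv.prodCongr ψ.toEquiv
  map_rel_iff' {a b} := by
    simp [boxProd_adj, Iso.map_adj_iff]

variable {V W α : Type*} {G : SimpleGraph V}

def layerColorings (H : Subgroup (G ≃g G)) (K : SimpleGraph W) (w₀ w₁ : W) (c₀ : V → α)
    (Q : Setoid V) : Set (V × W → α) :=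
  {c | (∀ a b, (G.boxProd K).Adj a b → c a ≠ c b) ∧ (∀ v, c (v, w₀) = c₀ v) ∧
    ∃ ψ ∈ H, Setoid.ker (fun v => c (v, w₁)) = Setoid.comap ψ Q}

def relabel (σ : Equiv.Perm α) (φ : G ≃g G) : (V × W → α) ≃ (V × W → α) :=
  Equiv.arrowCongr (φ.toEquiv.prodCongr (Equiv.refl W)).symm σ

@[simp]
theorem relabel_apply (σ : Equiv.Perm α) (φ : G ≃g G) (c : V × W → α) (p : V × W) :
    relabel σ φ c p = σ (c (φ p.1, p.2)) := rfl

theorem relabel_inv_relabel (σ : Equiv.Perm α) (φ : G ≃g G) (c : V × W → α) :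
    relabel σ⁻¹ φ⁻¹ (relabel σ φ c) = c :=
  (relabel σ φ).symm_apply_apply c

variable {H : Subgroup (G ≃g G)} {K : SimpleGraph W} {w₀ w₁ : W} {Q : Setoid V}

theorem relabel_mem_layerColorings (σ : Equiv.Perm α) {φ : G ≃g G} (hφ : φ ∈ H)
    {c₀ : V → α} {c : V × W → α} (hc : c ∈ layerColorings H K w₀ w₁ c₀ Q) :
    relabel σ φ c ∈ layerColorings H K w₀ w₁ (fun v => σ (c₀ (φ v))) Q := by
  obtain ⟨hproper, hlayer, ψ, hψ, hker⟩ := hc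
  refine ⟨fun a b hab => ?_, fun v => ?_, ψ * φ, H.mul_mem hψ hφ, ?_⟩
  · exact σ.injective.ne <| hproper _ _ <|
      (Iso.boxProdCongr φ (Iso.refl : K ≃g K)).map_adj_iff.2 hab
  · simp [hlayer]
  · calc Setoid.ker (fun v => relabel σ φ c (v, w₁))
        = Setoid.ker (σ ∘ (fun v => c (v, w₁)) ∘ φ) := rfl
      _ = Setoid.comap φ (Setoid.ker fun v => c (v, w₁)) := by
        rw [Setoid.ker_comp_of_injective σ.injective]; rfl
      _ = Setoid.comap (ψ * φ) Q := by rw [hker, RelIso.coe_mul, Setoid.comap_comp]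

theorem relabel_mem_layerColorings_iff (σ : Equiv.Perm α) {φ : G ≃g G} (hφ : φ ∈ H)
    {c₀ : V → α} {c : V × W → α} :
    relabel σ φ c ∈ layerColorings H K w₀ w₁ (fun v => σ (c₀ (φ v))) Q ↔
      c ∈ layerColorings H K w₀ w₁ c₀ Q := by
  refine ⟨fun h => ?_, relabel_mem_layerColorings σ hφ⟩
  simpa [relabel_inv_relabel] using relabel_mem_layerColorings σ⁻¹ (H.inv_mem hφ) h

end SimpleGraph

theorem transfer_entry_well_defined_general {V : Type*}
    (G : SimpleGraph V) (k : ℕ)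
    (H : Subgroup (G ≃g G))
    (c₁ c₂ : V → Fin k)
    (σ : Equiv.Perm (Fin k)) (φ : G ≃g G) (hφ : φ ∈ H)
    (hc₂ : c₂ = fun v => σ (c₁ (φ v)))
    (Q : Setoid V) :
    Nat.card {c : V × Fin 2 → Fin k //
        (∀ a b, (G.boxProd (pathGraph 2)).Adj a b → c a ≠ c b) ∧
        (∀ v, c (v, 0) = c₁ v) ∧
        (∃ ψ : G ≃g G, ψ ∈ H ∧
          Setoid.ker (fun v => c (v, 1)) = Setoid.comap (⇑ψ) Q)} =
    Nat.card {c : V × Fin 2 → Fin k //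
        (∀ a b, (G.boxProd (pathGraph 2)).Adj a b → c a ≠ c b) ∧
        (∀ v, c (v, 0) = c₂ v) ∧
        (∃ ψ : G ≃g G, ψ ∈ H ∧
          Setoid.ker (fun v => c (v, 1)) = Setoid.comap (⇑ψ) Q)} := by
  subst hc₂
  exact Nat.card_congr <| (relabel σ φ).subtypeEquiv fun c =>
    (relabel_mem_layerColorings_iff σ hφ).symm

/-- The entry of the compactified transfer matrix is independent of the
choice of representative: if `c₂ = σ ∘ c₁ ∘ φ` for a permutation `σ` of the colors and
`φ` in a subgroup `H` of the automorphism group of `G`, then the number of proper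
`k`-colorings of `G □ P₂` with layer-1 coloring `c₁` (resp. `c₂`) and layer-2 kernel
partition in the `H`-orbit of `Q` is the same. -/
theorem transfer_entry_well_defined {V : Type*} [Fintype V] [DecidableEq V]
    (G : SimpleGraph V) (k : ℕ) (hk : 1 ≤ k)
    (H : Subgroup (G ≃g G))
    (c₁ c₂ : V → Fin k)
    (h₁ : ∀ u v, G.Adj u v → c₁ u ≠ c₁ v)
    (h₂ : ∀ u v, G.Adj u v → c₂ u ≠ c₂ v)
    (σ : Equiv.Perm (Fin k)) (φ : G ≃g G) (hφ : φ ∈ H)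
    (hc₂ : c₂ = fun v => σ (c₁ (φ v)))
    (Q : Setoid V) (hQ : ∀ u v, Q.r u v → ¬ G.Adj u v) :
    Nat.card {c : V × Fin 2 → Fin k //
        (∀ a b, (G.boxProd (pathGraph 2)).Adj a b → c a ≠ c b) ∧
        (∀ v, c (v, 0) = c₁ v) ∧
        (∃ ψ : G ≃g G, ψ ∈ H ∧
          Setoid.ker (fun v => c (v, 1)) = Setoid.comap (⇑ψ) Q)} =
    Nat.card {c : V × Fin 2 → Fin k //
        (∀ a b, (G.boxProd (pathGraph 2)).Adj a b → c a ≠ c b) ∧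
        (∀ v, c (v, 0) = c₂ v) ∧
        (∃ ψ : G ≃g G, ψ ∈ H ∧
          Setoid.ker (fun v => c (v, 1)) = Setoid.comap (⇑ψ) Q)} :=
  transfer_entry_well_defined_general G k H c₁ c₂ σ φ hφ hc₂ Q
end

section
/- Let G be a finite simple graph on vertex set V with N = |V|, let P and Q be partitions of V into independent sets of G, and let c₀ : V → {1,…,N} be a proper coloring of G with kernel partition P. Then there exists a monic integer polynomial p whose degree equals the number of blocks of Q such that for every integer k ≥ N, p(k) equals the number of proper k-colorings of G □ P₂ whose layer-1 coloring equals c₀ and whose layer-2 kernel partition equals Q. -/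
/-!
Layer `0` is fixed to `c₀`, so a colouring counted by the theorem is determined by its layer `1`,
and since that layer has kernel `Q`, by an injective colouring `f` of the blocks of `Q` with
colours in `1..k`. The edges inside layer `1` are then automatically proper (blocks of `Q` are
independent), and the vertical edges say exactly that a block avoids the layer-`0` colours of its
vertices, all of which are `≤ N = |V|`. Sorting such `f` by the set `T` of blocks coloured `≤ N`:
the restriction to `T` ranges over a finite set that does not depend on `k`, and the other blocks
receive distinct colours in `N+1..k`, in `(k - N).descFactorial (|Q| - |T|)` ways. The count is
therefore `∑ T, a T * (k - N).descFactorial (|Q| - |T|)` with `a ∅ = 1`, a monic polynomial in `k`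
of degree `|Q|`.
-/

open Finset Function Polynomial SimpleGraph

section InjectiveCount

variable {α β : Type*}

theorem card_injective_mem_finset [Fintype α] (H : Finset β) :
    Nat.card {h : α → β // Injective h ∧ ∀ a, h a ∈ H} = H.card.descFactorial (Fintype.card α) := by
  classical
  let e : {h : α → β // Injective h ∧ ∀ a, h a ∈ H} ≃ (α ↪ H) :=
    { toFun h := ⟨fun a => ⟨h.1 a, h.2.2 a⟩, fun a b hab => h.2.1 (congrArg Subtype.val hab)⟩
      invFun e := ⟨fun a => e a, Subtype.val_injective.comp e.injective, fun a => (e a).2⟩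
      left_inv _ := rfl
      right_inv _ := rfl }
  rw [Nat.card_congr e, Nat.card_eq_fintype_card, Fintype.card_embedding_eq, Fintype.card_coe]

variable [DecidableEq β] (L : α → Finset β) (H : Finset β)

def injectiveMemUnionFiberEquiv [DecidableEq α] (hLH : ∀ a, Disjoint (L a) H) (T : Finset α) :
    {f : α → β // (Injective f ∧ ∀ a, f a ∈ L a ∪ H) ∧ ∀ a, a ∈ T ↔ f a ∉ H} ≃
      {g : T → β // Injective g ∧ ∀ a, g a ∈ L a.1} ×
        {h : {a // a ∉ T} → β // Injective h ∧ ∀ a, h a ∈ H} := by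
  refine ((Equiv.piEquivPiSubtypeProd (· ∈ T) fun _ => β).subtypeEquiv fun f => ?_).trans
    Equiv.subtypeProdEquivProd
  constructor
  · rintro ⟨⟨hinj, hmem⟩, hT⟩
    refine ⟨⟨hinj.comp Subtype.val_injective, fun a => ?_⟩,
      hinj.comp Subtype.val_injective, fun a => not_not.1 (mt (hT a).2 a.2)⟩
    exact (mem_union.1 (hmem a)).resolve_right ((hT a).1 a.2)
  · rintro ⟨⟨hinjT, hL⟩, hinjTc, hH⟩
    have hT (a : α) : a ∈ T ↔ f a ∉ H :=
      ⟨fun ha => disjoint_left.1 (hLH a) (hL ⟨a, ha⟩),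
        fun hfa => by_contra fun ha => hfa (hH ⟨a, ha⟩)⟩
    refine ⟨⟨fun a b hab => ?_, fun a => ?_⟩, hT⟩
    · have hab' : a ∈ T ↔ b ∈ T := by rw [hT, hT, hab]
      by_cases ha : a ∈ T
      · exact congrArg Subtype.val (@hinjT ⟨a, ha⟩ ⟨b, hab'.1 ha⟩ hab)
      · exact congrArg Subtype.val (@hinjTc ⟨a, ha⟩ ⟨b, mt hab'.2 ha⟩ hab)
    · by_cases ha : a ∈ T
      · exact mem_union_left _ (hL ⟨a, ha⟩)
      · exact mem_union_right _ (hH ⟨a, ha⟩)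

theorem card_injective_mem_union [Fintype α] [DecidableEq α] (hLH : ∀ a, Disjoint (L a) H) :
    Nat.card {f : α → β // Injective f ∧ ∀ a, f a ∈ L a ∪ H} =
      ∑ T : Finset α, Nat.card {g : T → β // Injective g ∧ ∀ a, g a ∈ L a.1} *
        H.card.descFactorial (Fintype.card α - T.card) := by
  let S := {f : α → β // Injective f ∧ ∀ a, f a ∈ L a ∪ H}
  let lowPart (f : S) : Finset α := univ.filter fun a => f.1 a ∉ H
  have : Finite S := Finite.of_injective (fun f a => (⟨f.1 a, f.2.2 a⟩ : ↥(L a ∪ H)))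
    fun f f' h => Subtype.ext (funext fun a => congrArg Subtype.val (congrFun h a))
  rw [← Nat.card_congr (Equiv.sigmaFiberEquiv lowPart), Nat.card_sigma]
  refine sum_congr rfl fun T _ => ?_
  have hfiber : {f : S // lowPart f = T} ≃
      {f : α → β // (Injective f ∧ ∀ a, f a ∈ L a ∪ H) ∧ ∀ a, a ∈ T ↔ f a ∉ H} :=
    (Equiv.subtypeSubtypeEquivSubtypeInter _
      fun f : α → β => univ.filter (fun a => f a ∉ H) = T).trans
      (Equiv.subtypeEquivRight fun f => by
        simp only [Finset.ext_iff, mem_filter, mem_univ, true_and, Iff.comm])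
  rw [Nat.card_congr (hfiber.trans (injectiveMemUnionFiberEquiv L H hLH T)), Nat.card_prod,
    card_injective_mem_finset, Fintype.card_subtype_compl, Fintype.card_coe]

end InjectiveCount

theorem eval_descPochhammer_comp_X_sub_C {N k : ℕ} (hk : N ≤ k) (m : ℕ) :
    ((descPochhammer ℤ m).comp (X - C (N : ℤ))).eval (k : ℤ) = (k - N).descFactorial m := by
  rw [eval_comp, eval_sub, eval_X, eval_C, ← Nat.cast_sub hk, descPochhammer_eval_eq_descFactorial]

theorem exists_monic_eval_eq_sum_descFactorial {ι : Type*} (s : Finset ι) (A : ι → ℤ)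
    (d : ι → ℕ) {i₀ : ι} (hi₀ : i₀ ∈ s) (hA : A i₀ = 1) (hd : ∀ i ∈ s, i ≠ i₀ → d i < d i₀)
    (N : ℕ) :
    ∃ p : ℤ[X], p.Monic ∧ p.natDegree = d i₀ ∧
      ∀ k, N ≤ k → p.eval (k : ℤ) = ∑ i ∈ s, A i * (k - N).descFactorial (d i) := by
  classical
  set q : ℕ → ℤ[X] := fun m => (descPochhammer ℤ m).comp (X - C (N : ℤ))
  have hq_monic (m : ℕ) : (q m).Monic := (monic_descPochhammer ℤ m).comp_X_sub_C _
  have hq_degree (m : ℕ) : (q m).degree = m := by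
    rw [degree_eq_natDegree (hq_monic m).ne_zero, natDegree_comp, descPochhammer_natDegree,
      natDegree_X_sub_C, mul_one]
  have hlower : (∑ i ∈ s.erase i₀, A i • q (d i)).degree < (q (d i₀)).degree := by
    rw [hq_degree, ← mem_degreeLT]
    refine Submodule.sum_mem _ fun i hi => Submodule.smul_mem _ _ (mem_degreeLT.2 ?_)
    rw [hq_degree]
    exact_mod_cast hd i (s.mem_of_mem_erase hi) (s.ne_of_mem_erase hi)
  refine ⟨q (d i₀) + ∑ i ∈ s.erase i₀, A i • q (d i), (hq_monic _).add_of_left hlower, ?_,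
    fun k hk => ?_⟩
  · rw [natDegree_add_eq_left_of_degree_lt hlower, natDegree_eq_of_degree_eq_some (hq_degree _)]
  · rw [← s.add_sum_erase _ hi₀, hA, one_mul, eval_add, eval_finsetSum]
    simp only [q, eval_smul, eval_descPochhammer_comp_X_sub_C hk, smul_eq_mul]

theorem exists_monic_eval_eq_card_injective_avoiding {α : Type*} [Fintype α] (N : ℕ)
    (F : α → Set ℕ) (hF : ∀ a, F a ⊆ Set.Iic N) :
    ∃ p : ℤ[X], p.Monic ∧ p.natDegree = Fintype.card α ∧ ∀ k, N ≤ k →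
      p.eval (k : ℤ) = Nat.card {f : α → ℕ // Injective f ∧ ∀ a, f a ∈ Icc 1 k ∧ f a ∉ F a} := by
  classical
  let L (a : α) : Finset ℕ := (Icc 1 N).filter (· ∉ F a)
  have hempty : Nat.card {g : (∅ : Finset α) → ℕ // Injective g ∧ ∀ a, g a ∈ L a.1} = 1 :=
    Nat.card_eq_one_iff_unique.2 ⟨inferInstance, ⟨⟨isEmptyElim, injective_of_subsingleton _,
      isEmptyElim⟩⟩⟩
  obtain ⟨p, hmonic, hdeg, heval⟩ := exists_monic_eval_eq_sum_descFactorial univ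
    (fun T : Finset α => (Nat.card {g : T → ℕ // Injective g ∧ ∀ a, g a ∈ L a.1} : ℤ))
    (fun T => Fintype.card α - T.card) (mem_univ ∅) (by rw [hempty, Nat.cast_one])
    (fun T _ hT => by
      have := card_pos.2 (nonempty_iff_ne_empty.2 hT)
      have := card_le_univ T
      rw [card_empty]
      omega) N
  refine ⟨p, hmonic, by simpa using hdeg, fun k hk => ?_⟩
  have hLH (a : α) : Disjoint (L a) (Ioc N k) := disjoint_left.2 fun m hmL hmH => by
    simp only [L, mem_filter, mem_Icc, mem_Ioc] at hmL hmH
    omega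
  have hmem (a : α) (m : ℕ) : m ∈ Icc 1 k ∧ m ∉ F a ↔ m ∈ L a ∪ Ioc N k := by
    by_cases hm : m ∈ F a
    · have : m ≤ N := hF a hm
      simp only [L, hm, mem_union, mem_filter, mem_Icc, mem_Ioc, not_true_eq_false, and_false,
        false_or, false_iff, not_and, not_le]
      omega
    · simp only [L, hm, mem_union, mem_filter, mem_Icc, mem_Ioc, not_false_eq_true, and_true]
      omega
  simp only [hmem]
  rw [heval k hk, card_injective_mem_union L (Ioc N k) hLH]
  push_cast
  simp [Nat.card_Ioc]

theorem boxProd_pathGraph_two_adj {V : Type*} {G : SimpleGraph V} {a b : V × Fin 2} :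
    (G.boxProd (pathGraph 2)).Adj a b ↔ G.Adj a.1 b.1 ∧ a.2 = b.2 ∨ a.1 = b.1 ∧ a.2 ≠ b.2 := by
  rw [boxProd_adj, pathGraph_two_eq_top, top_adj, and_comm (a := a.2 ≠ b.2)]

theorem boxProd_pathGraph_two_proper_iff {V γ : Type*} (G : SimpleGraph V) (c₀ c₁ : V → γ) :
    (∀ a b, (G.boxProd (pathGraph 2)).Adj a b → ![c₀ a.1, c₁ a.1] a.2 ≠ ![c₀ b.1, c₁ b.1] b.2) ↔
      (∀ u v, G.Adj u v → c₀ u ≠ c₀ v) ∧ (∀ u v, G.Adj u v → c₁ u ≠ c₁ v) ∧ ∀ v, c₀ v ≠ c₁ v := by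
  simp only [Prod.forall, Fin.forall_fin_two, boxProd_pathGraph_two_adj]
  simp only [and_true, ne_eq, not_true_eq_false, and_false, or_false, Matrix.cons_val_zero,
    zero_ne_one, not_false_eq_true, false_or, Matrix.cons_val_one, Matrix.cons_val_fin_one,
    one_ne_zero]
  constructor
  · intro h
    exact ⟨fun u v huv => ((h u).1 v).1 huv, fun u v huv => ((h u).2 v).2 huv,
      fun v => ((h v).1 v).2 rfl⟩
  · rintro ⟨h₀, h₁, hv⟩ u
    exact ⟨fun v => ⟨h₀ u v, fun huv => huv ▸ hv u⟩,
      fun v => ⟨fun huv => huv ▸ Ne.symm (hv u), h₁ u v⟩⟩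

def Setoid.kerEqEquiv {α β : Type*} (r : Setoid α) (p : (α → β) → Prop) :
    {g : α → β // Setoid.ker g = r ∧ p g} ≃
      {f : Quotient r → β // Injective f ∧ p (f ∘ Quotient.mk r)} where
  toFun g := ⟨Quotient.lift g.1 fun a b hab => by rwa [← g.2.1] at hab,
    Quotient.ind₂ fun a b hab => Quotient.sound (by rw [← g.2.1]; exact hab), g.2.2⟩
  invFun f := ⟨f.1 ∘ Quotient.mk r,
    Setoid.ext fun a b => f.2.1.eq_iff.trans Quotient.eq, f.2.2⟩
  left_inv _ := rfl
  right_inv f := Subtype.ext (funext (Quotient.ind fun _ => rfl))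

def twoLayerColoringsEquiv {V : Type*} (G : SimpleGraph V) (Q : Setoid V)
    (hQ : ∀ u v, Q.r u v → ¬ G.Adj u v) (c₀ : V → ℕ) (k : ℕ) (hc₀range : ∀ v, c₀ v ∈ Icc 1 k)
    (hc₀proper : ∀ u v, G.Adj u v → c₀ u ≠ c₀ v) :
    {c : V × Fin 2 → ℕ // (∀ a, c a ∈ Icc 1 k) ∧
        (∀ a b, (G.boxProd (pathGraph 2)).Adj a b → c a ≠ c b) ∧
        (∀ v, c (v, 0) = c₀ v) ∧ Setoid.ker (fun v => c (v, 1)) = Q} ≃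
      {c₁ : V → ℕ // Setoid.ker c₁ = Q ∧ ∀ v, c₁ v ∈ Icc 1 k ∧ c₁ v ≠ c₀ v} where
  toFun c := ⟨fun v => c.1 (v, 1), c.2.2.2.2, fun v => ⟨c.2.1 _, fun h =>
    c.2.2.1 (v, 0) (v, 1) (boxProd_pathGraph_two_adj.2 (Or.inr ⟨rfl, zero_ne_one⟩))
      ((c.2.2.2.1 v).trans h.symm)⟩⟩
  invFun c₁ := ⟨fun a => ![c₀ a.1, c₁.1 a.1] a.2,
    Prod.forall.2 fun v => Fin.forall_fin_two.2 ⟨hc₀range v, (c₁.2.2 v).1⟩,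
    (boxProd_pathGraph_two_proper_iff G c₀ c₁.1).2 ⟨hc₀proper,
      fun u v huv h => hQ u v (by rw [← c₁.2.1]; exact h) huv, fun v => (c₁.2.2 v).2.symm⟩,
    fun _ => rfl, c₁.2.1⟩
  left_inv c := Subtype.ext (funext fun ⟨v, i⟩ => by fin_cases i; exacts [(c.2.2.2.1 v).symm, rfl])
  right_inv _ := rfl

theorem transfer_entry_is_polynomial_general {V : Type*} [Fintype V]
    (G : SimpleGraph V) (Q : Setoid V)
    (hQ : ∀ u v, Q.r u v → ¬ G.Adj u v)
    (c₀ : V → ℕ)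
    (hc₀range : ∀ v, c₀ v ∈ Finset.Icc 1 (Fintype.card V))
    (hc₀proper : ∀ u v, G.Adj u v → c₀ u ≠ c₀ v) :
    ∃ p : Polynomial ℤ, p.Monic ∧ p.natDegree = Nat.card (Quotient Q) ∧
      ∀ k : ℕ, Fintype.card V ≤ k →
        p.eval (k : ℤ) =
          (Nat.card {c : V × Fin 2 → ℕ //
            (∀ a, c a ∈ Finset.Icc 1 k) ∧
            (∀ a b, (G.boxProd (pathGraph 2)).Adj a b → c a ≠ c b) ∧
            (∀ v, c (v, 0) = c₀ v) ∧
            Setoid.ker (fun v => c (v, 1)) = Q} : ℤ) := by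
  classical
  -- the colours that the vertical edges forbid to the block `x` in layer `1`
  let F (x : Quotient Q) : Set ℕ := c₀ '' (Quotient.mk Q ⁻¹' {x})
  obtain ⟨p, hmonic, hdeg, heval⟩ := exists_monic_eval_eq_card_injective_avoiding
    (Fintype.card V) F (by rintro x _ ⟨v, -, rfl⟩; exact (mem_Icc.1 (hc₀range v)).2)
  refine ⟨p, hmonic, by rw [hdeg, Nat.card_eq_fintype_card], fun k hk => ?_⟩
  have hforbid (f : Quotient Q → ℕ) :
      (∀ v, f (Quotient.mk Q v) ∈ Icc 1 k ∧ f (Quotient.mk Q v) ≠ c₀ v) ↔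
        ∀ x, f x ∈ Icc 1 k ∧ f x ∉ F x := by
    refine ⟨fun h => Quotient.ind fun v => ⟨(h v).1, ?_⟩,
      fun h v => ⟨(h (Quotient.mk Q v)).1, fun hv => (h (Quotient.mk Q v)).2 ⟨v, rfl, hv.symm⟩⟩⟩
    rintro ⟨u, hu, hfu⟩
    exact (h u).2 (by rw [Set.mem_preimage, Set.mem_singleton_iff] at hu; rw [hu, hfu])
  have hc₀range' (v : V) : c₀ v ∈ Icc 1 k := Icc_subset_Icc_right hk (hc₀range v)
  rw [heval k hk, Nat.card_congr <| (twoLayerColoringsEquiv G Q hQ c₀ k hc₀range' hc₀proper).trans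
    <| (Setoid.kerEqEquiv Q _).trans <| Equiv.subtypeEquivRight fun f =>
      and_congr_right' (hforbid f)]

/-- Each entry of the compactified transfer matrix is a monic integer
polynomial (for `k ≥ N = |V|`) whose degree is the number of blocks of the layer-2
partition `Q`. -/
theorem transfer_entry_is_polynomial {V : Type*} [Fintype V] [DecidableEq V]
    (G : SimpleGraph V) (P Q : Setoid V)
    (hP : ∀ u v, P.r u v → ¬ G.Adj u v)
    (hQ : ∀ u v, Q.r u v → ¬ G.Adj u v)
    (c₀ : V → ℕ)
    (hc₀range : ∀ v, c₀ v ∈ Finset.Icc 1 (Fintype.card V))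
    (hc₀proper : ∀ u v, G.Adj u v → c₀ u ≠ c₀ v)
    (hc₀ker : Setoid.ker c₀ = P) :
    ∃ p : Polynomial ℤ, p.Monic ∧ p.natDegree = Nat.card (Quotient Q) ∧
      ∀ k : ℕ, Fintype.card V ≤ k →
        p.eval (k : ℤ) =
          (Nat.card {c : V × Fin 2 → ℕ //
            (∀ a, c a ∈ Finset.Icc 1 k) ∧
            (∀ a b, (G.boxProd (pathGraph 2)).Adj a b → c a ≠ c b) ∧
            (∀ v, c (v, 0) = c₀ v) ∧
            Setoid.ker (fun v => c (v, 1)) = Q} : ℤ) :=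
  transfer_entry_is_polynomial_general G Q hQ c₀ hc₀range hc₀proper
end

section
/- Let G be a finite simple graph on vertex set V, let k ≥ |V|, let I be the (finite) set of all partitions of V into independent sets of G, and for each P ∈ I fix a proper k-coloring c_P of G with kernel partition P. Define the matrix L ∈ ℕ^{I×I} by L(P,Q) = number of proper k-colorings of G □ P₂ whose layer-1 coloring equals c_P and whose layer-2 kernel partition equals Q. Then for every integer n ≥ 1 and all P, Q ∈ I, the (P,Q)-entry of the matrix power Lⁿ equals the number of proper k-colorings of G □ P_{n+1} whose layer-1 coloring equals c_P and whose layer-(n+1) kernel partition equals Q. -/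
open SimpleGraph

/-- The set of partitions (as setoids) of the vertex set of `G` all of whose blocks
are independent sets of `G`. -/
def IndepPartition {V : Type*} (G : SimpleGraph V) : Type _ :=
  {s : Setoid V // ∀ u v, s.r u v → ¬ G.Adj u v}

instance {V : Type*} [Finite V] (G : SimpleGraph V) : Finite (IndepPartition G) := by
  have : Finite (Setoid V) :=
    Finite.of_injective (fun s : Setoid V => s.r)
      (fun a b h => Setoid.ext fun x y => by rw [show a.r = b.r from h])
  exact Subtype.finite

noncomputable instance {V : Type*} [Finite V] (G : SimpleGraph V) :
    Fintype (IndepPartition G) := Fintype.ofFinite _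

noncomputable instance {V : Type*} (G : SimpleGraph V) :
    DecidableEq (IndepPartition G) := Classical.decEq _

/-!
Let `A_m(P, Q)` count the proper colorings of `G □ P_{m+1}` with first layer `c_P` and last
kernel partition `Q`; thus `A_0 = 1` and `A_1 = L`. In such a coloring of `G □ P_{m+2}`, the
last layer can be any coloring `e` with kernel partition `Q` and `e v ≠ d v` for all `v`, where
`d` is the layer before it. The number of such `e` depends only on the kernel partition `R` of
`d`: a permutation of the colors carrying `d` to `c_R` maps the admissible `e` for `d`
bijectively onto those for `c_R`. Hence `A_{m+1} = A_m L`.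
-/

theorem Setoid.exists_perm_comp_eq_of_ker_eq {α β : Type*} [Finite α] {d d' : α → β}
    (h : Setoid.ker d = Setoid.ker d') : ∃ σ : Equiv.Perm β, ⇑σ ∘ d = d' := by
  classical
  let e : Set.range d ≃ Set.range d' :=
    (Setoid.quotientKerEquivRange d).symm.trans
      ((Quotient.congrRight (Setoid.ext_iff.mp h)).trans (Setoid.quotientKerEquivRange d'))
  have : Finite {b | b ∈ Set.range d} := inferInstanceAs (Finite (Set.range d))
  refine ⟨e.extendSubtype, funext fun a => ?_⟩
  rw [Function.comp_apply, Equiv.extendSubtype_apply_of_mem e _ (Set.mem_range_self a)]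
  change (e (Setoid.quotientKerEquivRange d ⟦a⟧) : β) = d' a
  simp only [e, Equiv.trans_apply, Equiv.symm_apply_apply]
  rfl

theorem Nat.card_sigma_of_card_eq {α : Type*} [Finite α] {T : α → Type*} [∀ a, Finite (T a)]
    {n : ℕ} (h : ∀ a, Nat.card (T a) = n) : Nat.card (Σ a, T a) = Nat.card α * n := by
  have := Fintype.ofFinite α
  simp only [Nat.card_sigma, h, Finset.sum_const, Finset.card_univ, smul_eq_mul,
    Nat.card_eq_fintype_card]

section

variable {V β : Type*} {G : SimpleGraph V}

namespace SimpleGraph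

variable (G) in
def IsProperColoring (c : V → β) : Prop :=
  ∀ u v, G.Adj u v → c u ≠ c v

theorem isProperColoring_boxProd_pathGraph_iff {n : ℕ} {c : V × Fin (n + 1) → β} :
    (G □ pathGraph (n + 1)).IsProperColoring c ↔
      (∀ i, G.IsProperColoring fun v => c (v, i)) ∧
        ∀ (i : Fin n) v, c (v, i.castSucc) ≠ c (v, i.succ) := by
  refine ⟨fun hc => ⟨fun i u v huv => hc _ _ (boxProd_adj_left.mpr huv),
    fun i v => hc _ _ (boxProd_adj_right.mpr (pathGraph_adj.mpr (Or.inl (by simp))))⟩, ?_⟩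
  rintro ⟨hlayer, hstep⟩ ⟨u, i⟩ ⟨v, j⟩ hadj
  rcases boxProd_adj.mp hadj with ⟨huv, rfl : i = j⟩ | ⟨hij, rfl : u = v⟩
  · exact hlayer i u v huv
  have hconsec : ∀ i j : Fin (n + 1), i.val + 1 = j.val → c (u, i) ≠ c (u, j) := by
    intro i j h
    obtain ⟨i', rfl, rfl⟩ : ∃ i' : Fin n, i = i'.castSucc ∧ j = i'.succ :=
      ⟨⟨i, by omega⟩, rfl, Fin.ext (by simp [← h])⟩
    exact hstep i' u
  rcases pathGraph_adj.mp hij with h | h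
  exacts [hconsec i j h, (hconsec j i h).symm]

theorem isProperColoring_boxProd_pathGraph_succ_iff {m : ℕ} {c : V × Fin (m + 1 + 1) → β} :
    (G □ pathGraph (m + 1 + 1)).IsProperColoring c ↔
      (G □ pathGraph (m + 1)).IsProperColoring (fun p => c (p.1, p.2.castSucc)) ∧
        G.IsProperColoring (fun v => c (v, Fin.last _)) ∧
        ∀ v, c (v, (Fin.last m).castSucc) ≠ c (v, Fin.last _) := by
  simp only [isProperColoring_boxProd_pathGraph_iff, Fin.forall_fin_succ' (n := m + 1),
    Fin.forall_fin_succ' (n := m), Fin.succ_castSucc, Fin.succ_last]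
  tauto

end SimpleGraph

namespace IndepPartition

def ofProperColoring {d : V → β} (hd : G.IsProperColoring d) : IndepPartition G :=
  ⟨Setoid.ker d, fun u v huv hadj => hd u v hadj (Setoid.ker_def.mp huv)⟩

theorem isProperColoring_of_ker_eq {Q : IndepPartition G} {e : V → β}
    (he : Setoid.ker e = Q.1) : G.IsProperColoring e :=
  fun u v hadj heq => Q.2 u v (he ▸ Setoid.ker_def.mpr heq) hadj

end IndepPartition

variable (G) in
abbrev PathColoring (m : ℕ) (d : V → β) : Type _ :=
  {c : V × Fin (m + 1) → β // (G □ pathGraph (m + 1)).IsProperColoring c ∧ ∀ v, c (v, 0) = d v}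

/-- Properness of `e` inside its layer follows from `Setoid.ker e = Q.1`. -/
abbrev NextLayer (d : V → β) (Q : IndepPartition G) : Type _ :=
  {e : V → β // (∀ v, e v ≠ d v) ∧ Setoid.ker e = Q.1}

theorem NextLayer.card_congr [Finite V] {d d' : V → β} (h : Setoid.ker d = Setoid.ker d')
    (Q : IndepPartition G) : Nat.card (NextLayer d Q) = Nat.card (NextLayer d' Q) := by
  obtain ⟨σ, rfl⟩ := Setoid.exists_perm_comp_eq_of_ker_eq h
  refine Nat.card_congr (Equiv.subtypeEquiv ((Equiv.refl V).arrowCongr σ) fun e => ?_)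
  have hker : Setoid.ker (⇑σ ∘ e) = Setoid.ker e := Setoid.ext fun _ _ => σ.injective.eq_iff
  change _ ↔ (∀ v, σ (e v) ≠ σ (d v)) ∧ Setoid.ker (⇑σ ∘ e) = Q.1
  simp [hker]

noncomputable def transferMatrix (r : IndepPartition G → V → β) :
    Matrix (IndepPartition G) (IndepPartition G) ℕ :=
  Matrix.of fun R Q => Nat.card (NextLayer (r R) Q)

namespace PathColoring

variable {m : ℕ} {d : V → β}

def lastLayer (c : PathColoring G m d) : V → β :=
  fun v => c.1 (v, Fin.last m)

def lastPart (c : PathColoring G m d) : IndepPartition G :=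
  .ofProperColoring ((isProperColoring_boxProd_pathGraph_iff.mp c.2.1).1 (Fin.last m))

def restrict (c : PathColoring G (m + 1) d) : PathColoring G m d :=
  ⟨fun p => c.1 (p.1, p.2.castSucc), (isProperColoring_boxProd_pathGraph_succ_iff.mp c.2.1).1,
    c.2.2⟩

theorem lastLayer_ne_restrict_lastLayer (c : PathColoring G (m + 1) d) (v : V) :
    c.lastLayer v ≠ c.restrict.lastLayer v :=
  ((isProperColoring_boxProd_pathGraph_succ_iff.mp c.2.1).2.2 v).symm

def snoc (c : PathColoring G m d) (e : V → β) (he : G.IsProperColoring e)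
    (hne : ∀ v, e v ≠ c.lastLayer v) : PathColoring G (m + 1) d :=
  ⟨fun p => Fin.lastCases (e p.1) (fun i => c.1 (p.1, i)) p.2,
    isProperColoring_boxProd_pathGraph_succ_iff.mpr
      ⟨by simpa using c.2.1, by simpa using he, fun v => by simpa [lastLayer] using (hne v).symm⟩,
    fun v => (Fin.lastCases_castSucc (i := 0) ..).trans (c.2.2 v)⟩

def snocEquiv (Q : IndepPartition G) :
    {c : PathColoring G (m + 1) d // c.lastPart = Q} ≃
      Σ c : PathColoring G m d, NextLayer c.lastLayer Q where
  toFun c := ⟨c.1.restrict, c.1.lastLayer, c.1.lastLayer_ne_restrict_lastLayer,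
    congrArg Subtype.val c.2⟩
  invFun ce := ⟨ce.1.snoc ce.2.1 (IndepPartition.isProperColoring_of_ker_eq ce.2.2.2) ce.2.2.1,
    Subtype.ext (by simpa [lastPart, IndepPartition.ofProperColoring, snoc] using ce.2.2.2)⟩
  left_inv c := Subtype.ext <| Subtype.ext <| funext fun ⟨v, i⟩ => by
    cases i using Fin.lastCases <;> simp [snoc, restrict, lastLayer]
  right_inv ce := Sigma.subtype_ext (Subtype.ext (funext fun p => by simp [snoc, restrict]))
    (funext fun v => by simp [snoc, lastLayer])

theorem card_lastPart_zero (hd : G.IsProperColoring d) (Q : IndepPartition G) :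
    Nat.card {c : PathColoring G 0 d // c.lastPart = Q} =
      if IndepPartition.ofProperColoring hd = Q then 1 else 0 := by
  have hlast : ∀ c : PathColoring G 0 d, c.lastLayer = d := fun c => funext c.2.2
  have : Unique (PathColoring G 0 d) :=
    { default := ⟨fun p => d p.1, isProperColoring_boxProd_pathGraph_iff.mpr
        ⟨fun _ => hd, fun i => i.elim0⟩, fun _ => rfl⟩
      uniq := fun c => Subtype.ext <| funext fun ⟨v, i⟩ => by
        rw [Fin.fin_one_eq_zero i]; exact c.2.2 v }
  have hpart : (default : PathColoring G 0 d).lastPart = .ofProperColoring hd :=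
    Subtype.ext (congrArg Setoid.ker (hlast default))
  split_ifs with h
  · have : Unique {c : PathColoring G 0 d // c.lastPart = Q} :=
      ⟨⟨⟨default, hpart.trans h⟩⟩, fun c => Subtype.ext (Unique.eq_default c.1)⟩
    exact Nat.card_unique
  · have : IsEmpty {c : PathColoring G 0 d // c.lastPart = Q} :=
      ⟨fun c => h (by rw [← hpart, ← Unique.eq_default c.1]; exact c.2)⟩
    exact Nat.card_of_isEmpty

theorem card_lastPart_succ [Finite V] [Finite β] {r : IndepPartition G → V → β}
    (hr : ∀ R, Setoid.ker (r R) = R.1) (Q : IndepPartition G) :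
    Nat.card {c : PathColoring G (m + 1) d // c.lastPart = Q} =
      ∑ R, Nat.card {c : PathColoring G m d // c.lastPart = R} * transferMatrix r R Q := by
  rw [Nat.card_congr ((snocEquiv Q).trans ((Equiv.sigmaCongrLeft
    (Equiv.sigmaFiberEquiv lastPart)).symm.trans (Equiv.sigmaAssoc
      fun R (c : {c : PathColoring G m d // c.lastPart = R}) => NextLayer c.1.lastLayer Q))),
    Nat.card_sigma]
  refine Finset.sum_congr rfl fun R _ => Nat.card_sigma_of_card_eq fun c => ?_
  exact NextLayer.card_congr ((congrArg Subtype.val c.2).trans (hr R).symm) Q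

theorem card_lastPart_eq_transferMatrix_pow [Finite V] [Finite β] {r : IndepPartition G → V → β}
    (hr : ∀ R, Setoid.ker (r R) = R.1) (m : ℕ) (P Q : IndepPartition G) :
    Nat.card {c : PathColoring G m (r P) // c.lastPart = Q} = (transferMatrix r ^ m) P Q := by
  induction m generalizing Q with
  | zero =>
    have hP : IndepPartition.ofProperColoring (IndepPartition.isProperColoring_of_ker_eq (hr P))
        = P := Subtype.ext (hr P)
    rw [card_lastPart_zero (IndepPartition.isProperColoring_of_ker_eq (hr P)), hP, pow_zero,
      Matrix.one_apply]
  | succ m ih =>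
    simp only [card_lastPart_succ hr, ih, pow_succ, Matrix.mul_apply]

theorem card_lastPart_eq (d : V → β) (Q : IndepPartition G) :
    Nat.card {c : PathColoring G m d // c.lastPart = Q} =
      Nat.card {c : V × Fin (m + 1) → β // (G □ pathGraph (m + 1)).IsProperColoring c ∧
        (∀ v, c (v, 0) = d v) ∧ Setoid.ker (fun v => c (v, Fin.last m)) = Q.1} :=
  Nat.card_congr
    { toFun c := ⟨c.1.1, c.1.2.1, c.1.2.2, congrArg Subtype.val c.2⟩
      invFun c := ⟨⟨c.1, c.2.1, c.2.2.1⟩, Subtype.ext c.2.2.2⟩ }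

end PathColoring

end

theorem transfer_matrix_power_general {V : Type*} [Fintype V]
    (G : SimpleGraph V) (k : ℕ)
    (cP : IndepPartition G → V → Fin k)
    (hcPker : ∀ P : IndepPartition G, Setoid.ker (cP P) = P.1)
    (L : Matrix (IndepPartition G) (IndepPartition G) ℕ)
    (hL : ∀ P Q : IndepPartition G,
      L P Q = Nat.card {c : V × Fin 2 → Fin k //
        (∀ a b, (G.boxProd (pathGraph 2)).Adj a b → c a ≠ c b) ∧
        (∀ v, c (v, 0) = cP P v) ∧
        Setoid.ker (fun v => c (v, 1)) = Q.1}) :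
    ∀ n : ℕ, 1 ≤ n → ∀ P Q : IndepPartition G,
      (L ^ n) P Q = Nat.card {c : V × Fin (n + 1) → Fin k //
        (∀ a b, (G.boxProd (pathGraph (n + 1))).Adj a b → c a ≠ c b) ∧
        (∀ v, c (v, 0) = cP P v) ∧
        Setoid.ker (fun v => c (v, Fin.last n)) = Q.1} := by
  have hcount : ∀ m P Q, (transferMatrix cP ^ m) P Q = Nat.card {c : V × Fin (m + 1) → Fin k //
      (G □ pathGraph (m + 1)).IsProperColoring c ∧ (∀ v, c (v, 0) = cP P v) ∧
        Setoid.ker (fun v => c (v, Fin.last m)) = Q.1} := fun m P Q =>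
    (PathColoring.card_lastPart_eq_transferMatrix_pow hcPker m P Q).symm.trans
      (PathColoring.card_lastPart_eq _ Q)
  have hLT : L = transferMatrix cP := Matrix.ext fun R Q => by
    rw [hL, ← pow_one (transferMatrix cP), hcount]
    rfl
  intro n _ P Q
  rw [hLT, hcount]
  rfl

/-- The compactified transfer matrix `L` behaves like a transfer matrix:
the `(P,Q)`-entry of `Lⁿ` counts the proper `k`-colorings of `G □ P_{n+1}` whose first
layer is colored by the fixed representative `c_P` and whose last layer has kernel
partition `Q`. -/
theorem transfer_matrix_power {V : Type*} [Fintype V] [DecidableEq V]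
    (G : SimpleGraph V) (k : ℕ) (hk : Fintype.card V ≤ k)
    (cP : IndepPartition G → V → Fin k)
    (hcPproper : ∀ P : IndepPartition G, ∀ u v, G.Adj u v → cP P u ≠ cP P v)
    (hcPker : ∀ P : IndepPartition G, Setoid.ker (cP P) = P.1)
    (L : Matrix (IndepPartition G) (IndepPartition G) ℕ)
    (hL : ∀ P Q : IndepPartition G,
      L P Q = Nat.card {c : V × Fin 2 → Fin k //
        (∀ a b, (G.boxProd (pathGraph 2)).Adj a b → c a ≠ c b) ∧
        (∀ v, c (v, 0) = cP P v) ∧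
        Setoid.ker (fun v => c (v, 1)) = Q.1}) :
    ∀ n : ℕ, 1 ≤ n → ∀ P Q : IndepPartition G,
      (L ^ n) P Q = Nat.card {c : V × Fin (n + 1) → Fin k //
        (∀ a b, (G.boxProd (pathGraph (n + 1))).Adj a b → c a ≠ c b) ∧
        (∀ v, c (v, 0) = cP P v) ∧
        Setoid.ker (fun v => c (v, Fin.last n)) = Q.1} :=
  transfer_matrix_power_general G k cP hcPker L hL
end

section
/- For every integer n ≥ 1, the number of partitions of {1,…,n} into blocks none of which contains two consecutive integers i and i+1 (equivalently, all of whose blocks are independent sets of the path graph P_n) equals B_{n−1}, the number of partitions of a set with n−1 elements. -/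
/-!
Encode a partition of `Fin m` by the map `f` sending each element to its predecessor in its
block, and each least element of a block to itself. These maps are exactly those with `f i ≤ i`
that are injective on `{i | f i < i}`, and the partition is recovered as the kernel of `f^[m]`,
which sends `i` to the least element of its block. A block contains two consecutive integers iff
`f` has an arc `(i - 1, i)`. Moving the head of every arc one step back, `(p, i) ↦ (p, i - 1)`,
is a bijection from the maps on `Fin (m + 1)` without such arcs onto all maps on `Fin m`.
-/

/-- The `m`-th Bell number: the number of partitions (equivalence relations) of an
`m`-element set. -/
noncomputable def bell (m : ℕ) : ℕ := Nat.card (Setoid (Fin m))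

open Finset Function

variable {m : ℕ}

structure IsPredMap (f : Fin m → Fin m) : Prop where
  le : ∀ i, f i ≤ i
  injOn : Set.InjOn f {i | f i < i}

namespace Setoid

variable (st : Setoid (Fin m)) {i j : Fin m}

open scoped Classical in
noncomputable def earlierInBlock (i : Fin m) : Finset (Fin m) :=
  {j | j < i ∧ st.r j i}

variable {st}

lemma mem_earlierInBlock : j ∈ st.earlierInBlock i ↔ j < i ∧ st.r j i := by
  simp [earlierInBlock]

variable (st) in
noncomputable def predInBlock (i : Fin m) : Fin m :=
  if h : (st.earlierInBlock i).Nonempty then (st.earlierInBlock i).max' h else i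

lemma predInBlock_mem (h : j ∈ st.earlierInBlock i) : st.predInBlock i ∈ st.earlierInBlock i := by
  rw [predInBlock, dif_pos ⟨j, h⟩]
  exact max'_mem _ _

lemma le_predInBlock (h : j ∈ st.earlierInBlock i) : j ≤ st.predInBlock i := by
  rw [predInBlock, dif_pos ⟨j, h⟩]
  exact le_max' _ _ h

lemma predInBlock_eq_self (h : ∀ j, j ∉ st.earlierInBlock i) : st.predInBlock i = i :=
  dif_neg fun ⟨j, hj⟩ => h j hj

lemma predInBlock_eq_self_or_mem :
    st.predInBlock i = i ∨ st.predInBlock i ∈ st.earlierInBlock i := by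
  by_cases h : ∃ j, j ∈ st.earlierInBlock i
  · obtain ⟨j, hj⟩ := h
    exact .inr (predInBlock_mem hj)
  · exact .inl (predInBlock_eq_self (not_exists.1 h))

variable (st) (i)

lemma predInBlock_le : st.predInBlock i ≤ i := by
  rcases predInBlock_eq_self_or_mem (st := st) (i := i) with h | h
  · exact h.le
  · exact (mem_earlierInBlock.1 h).1.le

lemma rel_predInBlock : st.r (st.predInBlock i) i := by
  rcases predInBlock_eq_self_or_mem (st := st) (i := i) with h | h
  · rw [h]
  · exact (mem_earlierInBlock.1 h).2

lemma isPredMap_predInBlock : IsPredMap st.predInBlock := by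
  refine ⟨st.predInBlock_le, ?_⟩
  -- if `i < j` share their predecessor `p < i`, then `p < i ≤ st.predInBlock j = p`
  have key : ∀ i j, st.predInBlock i < i → st.predInBlock i = st.predInBlock j → ¬ i < j :=
    fun i j hi hij hlt ↦ (le_predInBlock (mem_earlierInBlock.2 ⟨hlt,
      st.trans (st.symm (st.rel_predInBlock i)) (hij ▸ st.rel_predInBlock j)⟩)).not_gt (hij ▸ hi)
  exact fun i hi j hj hij ↦ le_antisymm (not_lt.1 (key j i hj hij.symm)) (not_lt.1 (key i j hi hij))

end Setoid

section Iterate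

variable {f : Fin m → Fin m}

lemma antitone_iterate (hf : ∀ i, f i ≤ i) (i : Fin m) : Antitone fun k ↦ f^[k] i :=
  antitone_nat_of_succ_le fun k ↦ by
    rw [iterate_succ_apply']
    exact hf _

lemma iterate_le (hf : ∀ i, f i ≤ i) (k : ℕ) (i : Fin m) : f^[k] i ≤ i :=
  antitone_iterate hf i (Nat.zero_le k)

lemma isFixedPt_iterate_card (hf : ∀ i, f i ≤ i) (i : Fin m) : IsFixedPt f (f^[m] i) := by
  -- until the orbit stops, each step lowers it by at least one
  have key : ∀ k, IsFixedPt f (f^[k] i) ∨ (f^[k] i : ℕ) + k ≤ i := by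
    intro k
    induction k with
    | zero => simp
    | succ k ih =>
      rcases (hf (f^[k] i)).eq_or_lt with hfix | hlt
      · left
        rw [iterate_succ_apply', hfix]
        exact hfix
      · right
        rw [iterate_succ_apply']
        have := ih.resolve_left hlt.ne
        rw [Fin.lt_def] at hlt
        omega
  exact (key m).resolve_right fun h ↦ by have := i.isLt; omega

lemma iterate_card_apply (hf : ∀ i, f i ≤ i) (i : Fin m) : f^[m] (f i) = f^[m] i := by
  rw [← iterate_succ_apply, iterate_succ_apply', (isFixedPt_iterate_card hf i).eq]

lemma IsPredMap.le_apply_of_iterate_eq (hf : IsPredMap f) {i j : Fin m} (hji : j < i)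
    {a b : ℕ} (h : f^[a] j = f^[b] i) : j ≤ f i := by
  -- Strip the last step off both sides: either both steps move, and injectivity cancels them,
  -- or one side has already reached the common root and stays there.
  induction hN : a + b using Nat.strong_induction_on generalizing a b with
  | _ N ih =>
    rcases a with _ | a <;> rcases b with _ | b
    · exact absurd h hji.ne
    · rw [iterate_zero_apply, iterate_succ_apply] at h
      exact h ▸ iterate_le hf.le b (f i)
    · exact absurd h ((iterate_le hf.le _ j).trans_lt hji).ne
    · rw [iterate_succ_apply', iterate_succ_apply'] at h
      rcases (hf.le (f^[a] j)).eq_or_lt with hx | hx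
      · exact ih (a + (b + 1)) (by omega) (by rw [iterate_succ_apply', ← h, hx]) rfl
      rcases (hf.le (f^[b] i)).eq_or_lt with hy | hy
      · exact ih (a + 1 + b) (by omega) (by rw [iterate_succ_apply', h, hy]) rfl
      · exact ih (a + b) (by omega) (hf.injOn hx hy h) rfl

end Iterate

namespace Setoid

variable (st : Setoid (Fin m))

lemma rel_iterate_predInBlock (k : ℕ) (i : Fin m) : st.r (st.predInBlock^[k] i) i := by
  induction k with
  | zero => exact st.refl' i
  | succ k ih =>
    rw [iterate_succ_apply']
    exact st.trans (st.rel_predInBlock _) ih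

lemma iterate_card_predInBlock_le {i j : Fin m} (h : st.r j (st.predInBlock^[m] i)) :
    st.predInBlock^[m] i ≤ j := by
  by_contra! hlt
  have hmem := predInBlock_mem (mem_earlierInBlock.2 ⟨hlt, h⟩)
  rw [(isFixedPt_iterate_card st.predInBlock_le i).eq, mem_earlierInBlock] at hmem
  exact hmem.1.false

lemma ker_iterate_predInBlock : Setoid.ker (st.predInBlock^[m]) = st := by
  ext a b
  rw [Setoid.ker_def]
  have ha := st.rel_iterate_predInBlock m a
  have hb := st.rel_iterate_predInBlock m b
  constructor
  · intro h
    exact st.trans (st.symm ha) (h ▸ hb)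
  · intro h
    have hab : st.r (st.predInBlock^[m] a) (st.predInBlock^[m] b) :=
      st.trans ha (st.trans h (st.symm hb))
    exact le_antisymm (st.iterate_card_predInBlock_le (st.symm hab))
      (st.iterate_card_predInBlock_le hab)

end Setoid

lemma IsPredMap.predInBlock_ker_iterate {f : Fin m → Fin m} (hf : IsPredMap f) :
    (Setoid.ker (f^[m])).predInBlock = f := by
  funext i
  rcases (hf.le i).eq_or_lt with hfix | hlt
  · rw [hfix]
    refine Setoid.predInBlock_eq_self fun j hj ↦ ?_
    obtain ⟨hji, hrel⟩ := Setoid.mem_earlierInBlock.1 hj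
    rw [Setoid.ker_def, iterate_fixed hfix] at hrel
    exact ((iterate_le hf.le m j).trans_lt hji).ne hrel
  · have hmem : f i ∈ (Setoid.ker (f^[m])).earlierInBlock i :=
      Setoid.mem_earlierInBlock.2 ⟨hlt, iterate_card_apply hf.le i⟩
    obtain ⟨hlt', hrel⟩ := Setoid.mem_earlierInBlock.1 (Setoid.predInBlock_mem hmem)
    exact le_antisymm (hf.le_apply_of_iterate_eq hlt' hrel) (Setoid.le_predInBlock hmem)

variable (m) in
noncomputable def setoidEquivIsPredMap : Setoid (Fin m) ≃ {f : Fin m → Fin m // IsPredMap f} where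
  toFun st := ⟨st.predInBlock, st.isPredMap_predInBlock⟩
  invFun f := Setoid.ker (f.1^[m])
  left_inv := Setoid.ker_iterate_predInBlock
  right_inv f := Subtype.ext f.2.predInBlock_ker_iterate

def HasNoUnitArc (f : Fin m → Fin m) : Prop :=
  ∀ i, f i < i → (f i : ℕ) + 1 < i

lemma Setoid.forall_not_pathGraph_adj_iff (st : Setoid (Fin m)) :
    (∀ a b, st.r a b → ¬ (SimpleGraph.pathGraph m).Adj a b) ↔ HasNoUnitArc st.predInBlock := by
  simp only [SimpleGraph.pathGraph_adj]
  constructor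
  · intro h i hi
    by_contra hunit
    exact h _ i (st.rel_predInBlock i) (.inl (by rw [Fin.lt_def] at hi; omega))
  · have key : ∀ a b, st.r a b → HasNoUnitArc st.predInBlock → (a : ℕ) + 1 ≠ b := by
      intro a b hab h hunit
      have hmem : a ∈ st.earlierInBlock b := mem_earlierInBlock.2 ⟨Fin.lt_def.2 (by omega), hab⟩
      have hle : (a : ℕ) ≤ st.predInBlock b := le_predInBlock hmem
      have := h b (mem_earlierInBlock.1 (predInBlock_mem hmem)).1
      omega
    rintro h a b hab (hadj | hadj)
    · exact key a b hab h hadj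
    · exact key b a (st.symm hab) h hadj

def shortenArcs (f : Fin (m + 1) → Fin (m + 1)) (j : Fin m) : Fin m :=
  if h : (f j.succ : ℕ) < j then ⟨f j.succ, h.trans j.isLt⟩ else j

def lengthenArcs (g : Fin m → Fin m) : Fin (m + 1) → Fin (m + 1) :=
  Fin.cases 0 fun j ↦ if g j < j then (g j).castSucc else j.succ

section Shift

variable {f : Fin (m + 1) → Fin (m + 1)} {g : Fin m → Fin m}

lemma val_shortenArcs (j : Fin m) :
    (shortenArcs f j : ℕ) = if (f j.succ : ℕ) < j then (f j.succ : ℕ) else j := by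
  unfold shortenArcs
  split_ifs <;> rfl

lemma val_lengthenArcs_succ (j : Fin m) :
    (lengthenArcs g j.succ : ℕ) = if (g j : ℕ) < j then (g j : ℕ) else (j : ℕ) + 1 := by
  simp only [lengthenArcs, Fin.cases_succ, Fin.lt_def]
  split_ifs <;> rfl

lemma isPredMap_shortenArcs (hf : IsPredMap f) : IsPredMap (shortenArcs f) := by
  have arc : ∀ j, shortenArcs f j < j → f j.succ < j.succ ∧ (shortenArcs f j : ℕ) = f j.succ := by
    intro j hj
    rw [Fin.lt_def, val_shortenArcs] at hj
    rw [Fin.lt_def, Fin.val_succ, val_shortenArcs]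
    split_ifs at hj ⊢ <;> omega
  refine ⟨fun j ↦ ?_, fun i hi j hj hij ↦ ?_⟩
  · rw [Fin.le_def, val_shortenArcs]
    split_ifs <;> omega
  · obtain ⟨hi, hvi⟩ := arc i hi
    obtain ⟨hj, hvj⟩ := arc j hj
    have hf_eq : f i.succ = f j.succ := Fin.ext (by rw [← hvi, ← hvj, hij])
    exact Fin.succ_injective m (hf.injOn hi hj hf_eq)

lemma exists_eq_succ_of_lengthenArcs_lt {i : Fin (m + 1)} (hi : lengthenArcs g i < i) :
    ∃ j, i = j.succ ∧ g j < j ∧ (lengthenArcs g i : ℕ) = g j := by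
  induction i using Fin.cases with
  | zero => exact absurd hi (Fin.not_lt_zero _)
  | succ j =>
    rw [Fin.lt_def, val_lengthenArcs_succ, Fin.val_succ] at hi
    have hlt : (g j : ℕ) < j := by split_ifs at hi <;> omega
    exact ⟨j, rfl, hlt, by rw [val_lengthenArcs_succ, if_pos hlt]⟩

lemma isPredMap_lengthenArcs (hg : IsPredMap g) : IsPredMap (lengthenArcs g) := by
  refine ⟨fun i ↦ ?_, fun i hi i' hi' hii' ↦ ?_⟩
  · induction i using Fin.cases with
    | zero => exact le_rfl
    | succ j =>
      rw [Fin.le_def, val_lengthenArcs_succ, Fin.val_succ]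
      split_ifs <;> omega
  · obtain ⟨j, rfl, hj, hvj⟩ := exists_eq_succ_of_lengthenArcs_lt hi
    obtain ⟨j', rfl, hj', hvj'⟩ := exists_eq_succ_of_lengthenArcs_lt hi'
    rw [hg.injOn hj hj' (Fin.ext (by rw [← hvj, ← hvj', hii']))]

lemma hasNoUnitArc_lengthenArcs (g : Fin m → Fin m) : HasNoUnitArc (lengthenArcs g) := by
  intro i hi
  obtain ⟨j, rfl, hj, hvj⟩ := exists_eq_succ_of_lengthenArcs_lt hi
  rw [hvj, Fin.val_succ]
  exact Nat.succ_lt_succ hj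

lemma lengthenArcs_shortenArcs (hf : IsPredMap f) (hns : HasNoUnitArc f) :
    lengthenArcs (shortenArcs f) = f := by
  funext i
  induction i using Fin.cases with
  | zero => exact (Fin.le_zero_iff.1 (hf.le 0)).symm
  | succ j =>
    apply Fin.ext
    rw [val_lengthenArcs_succ, val_shortenArcs]
    have hle := hf.le j.succ
    have hns := hns j.succ
    rw [Fin.le_def, Fin.val_succ] at hle
    rw [Fin.lt_def, Fin.val_succ] at hns
    split_ifs <;> omega

lemma shortenArcs_lengthenArcs (hg : ∀ j, g j ≤ j) : shortenArcs (lengthenArcs g) = g := by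
  funext j
  apply Fin.ext
  have hle : (g j : ℕ) ≤ j := hg j
  rw [val_shortenArcs, val_lengthenArcs_succ]
  split_ifs <;> omega

end Shift

variable (m) in
def shortenArcsEquiv :
    {f : Fin (m + 1) → Fin (m + 1) // IsPredMap f ∧ HasNoUnitArc f} ≃
      {g : Fin m → Fin m // IsPredMap g} where
  toFun f := ⟨shortenArcs f.1, isPredMap_shortenArcs f.2.1⟩
  invFun g := ⟨lengthenArcs g.1, isPredMap_lengthenArcs g.2, hasNoUnitArc_lengthenArcs g.1⟩
  left_inv f := Subtype.ext (lengthenArcs_shortenArcs f.2.1 f.2.2)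
  right_inv g := Subtype.ext (shortenArcs_lengthenArcs g.2.le)

theorem path_indep_partitions_eq_bell_general (n : ℕ) :
    Nat.card {st : Setoid (Fin n) //
        ∀ a b, st.r a b → ¬ (SimpleGraph.pathGraph n).Adj a b} = bell (n - 1) := by
  cases n with
  | zero => exact Nat.card_congr (Equiv.subtypeUnivEquiv fun _ a ↦ a.elim0)
  | succ m =>
    refine Nat.card_congr ?_
    calc {st : Setoid (Fin (m + 1)) // ∀ a b, st.r a b → ¬ (SimpleGraph.pathGraph (m + 1)).Adj a b}
        ≃ {f : {f // IsPredMap f} // HasNoUnitArc f.1} :=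
          (setoidEquivIsPredMap (m + 1)).subtypeEquiv Setoid.forall_not_pathGraph_adj_iff
      _ ≃ {f // IsPredMap f ∧ HasNoUnitArc f} := Equiv.subtypeSubtypeEquivSubtypeInter _ _
      _ ≃ {g : Fin m → Fin m // IsPredMap g} := shortenArcsEquiv m
      _ ≃ Setoid (Fin m) := (setoidEquivIsPredMap m).symm

/-- The number of partitions of `{1,…,n}` into blocks that are
independent sets of the path graph `P_n` (i.e. no block contains two consecutive
integers) equals the Bell number `B_{n-1}`. -/
theorem path_indep_partitions_eq_bell (n : ℕ) (hn : 1 ≤ n) :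
    Nat.card {st : Setoid (Fin n) //
        ∀ a b, st.r a b → ¬ (SimpleGraph.pathGraph n).Adj a b} = bell (n - 1) :=
  path_indep_partitions_eq_bell_general n
end

section
/- For every integer n ≥ 3, the number of partitions of the vertex set {1,…,n} of the cycle graph C_n into blocks all of which are independent sets of C_n equals Σ_{j=1}^{n−1} (−1)^{n−1−j} B_j, i.e. B_{n−1} − B_{n−2} + B_{n−3} − ⋯ + (−1)^n B_1. -/
open Relation SimpleGraph

variable {α : Type*}

structure IsArcDiagram [LT α] (r : α → α → Prop) : Prop where
  lt : ∀ ⦃i j⦄, r i j → i < j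
  right_unique : Relator.RightUnique r
  left_unique : Relator.LeftUnique r

namespace IsArcDiagram

variable {r : α → α → Prop}

theorem le_of_reflTransGen [Preorder α] (h : IsArcDiagram r) {a b : α}
    (hab : ReflTransGen r a b) : a ≤ b := by
  induction hab with
  | refl => exact le_rfl
  | tail _ hbc ih => exact ih.trans (h.lt hbc).le

theorem reflTransGen_of_join [PartialOrder α] (h : IsArcDiagram r) {a b : α}
    (hab : a ≤ b) (hj : Join (ReflTransGen r) a b) : ReflTransGen r a b := by
  obtain ⟨c, hac, hbc⟩ := hj
  -- reversed arcs form a partial function, so two chains of arcs ending at `c` are nested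
  rw [← reflTransGen_swap] at hac hbc
  have swap_unique : Relator.RightUnique (Function.swap r) := fun _ _ _ h₁ h₂ ↦
    h.left_unique h₁ h₂
  rcases hac.total_of_right_unique swap_unique hbc with hba | hab'
  · rw [le_antisymm hab (h.le_of_reflTransGen (reflTransGen_swap.mp hba))]
  · exact reflTransGen_swap.mp hab'

def setoid [LT α] (h : IsArcDiagram r) : Setoid α where
  r := Join (ReflTransGen r)
  iseqv := equivalence_join_reflTransGen fun _ _ _ hb hc ↦
    ⟨_, h.right_unique hb hc ▸ .refl, .refl⟩

end IsArcDiagram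

namespace Setoid

variable [LinearOrder α] (s : Setoid α)

def Arc (i j : α) : Prop := i < j ∧ s i j ∧ ∀ k, i < k → s i k → j ≤ k

theorem isArcDiagram_arc : IsArcDiagram s.Arc where
  lt _ _ h := h.1
  right_unique _ _ _ h₁ h₂ :=
    le_antisymm (h₁.2.2 _ h₂.1 h₂.2.1) (h₂.2.2 _ h₁.1 h₁.2.1)
  left_unique i i' j h₁ h₂ := by
    rcases lt_trichotomy i i' with hlt | heq | hgt
    · exact absurd (h₁.2.2 i' hlt (s.trans' h₁.2.1 (s.symm' h₂.2.1))) (not_le.mpr h₂.1)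
    · exact heq
    · exact absurd (h₂.2.2 i hgt (s.trans' h₂.2.1 (s.symm' h₁.2.1))) (not_le.mpr h₁.1)

theorem arc_iff_of_covBy {a b : α} (hab : a ⋖ b) : s.Arc a b ↔ s a b :=
  ⟨fun h ↦ h.2.1, fun h ↦ ⟨hab.lt, h, fun _ hk _ ↦ hab.ge_of_gt hk⟩⟩

theorem reflTransGen_arc [Finite α] {a b : α} (hab : a ≤ b) (h : s a b) :
    ReflTransGen s.Arc a b := by
  induction b using WellFoundedLT.induction with
  | _ b ih =>
    rcases hab.eq_or_lt with rfl | hlt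
    · exact .refl
    obtain ⟨i, ⟨hai, hib, hsi⟩, hmax⟩ :=
      wellFounded_gt.has_min {i | a ≤ i ∧ i < b ∧ s i b} ⟨a, le_rfl, hlt, h⟩
    have harc : s.Arc i b := by
      refine ⟨hib, hsi, fun k hik hsk ↦ not_lt.mp fun hkb ↦ ?_⟩
      exact hmax k ⟨hai.trans hik.le, hkb, s.trans' (s.symm' hsk) hsi⟩ hik
    exact (ih i hib hai (s.trans' h (s.symm' hsi))).tail harc

theorem isArcDiagram_arc_setoid [Finite α] : s.isArcDiagram_arc.setoid = s := by
  ext a b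
  constructor
  · rintro ⟨c, hac, hbc⟩
    have rel_of : ∀ {x y}, ReflTransGen s.Arc x y → s x y := fun hxy ↦ by
      induction hxy with
      | refl => exact s.refl' _
      | tail _ hyz ih => exact s.trans' ih hyz.2.1
    exact s.trans' (rel_of hac) (s.symm' (rel_of hbc))
  · intro h
    rcases le_total a b with hab | hba
    · exact ⟨b, s.reflTransGen_arc hab h, .refl⟩
    · exact ⟨a, .refl, s.reflTransGen_arc hba (s.symm' h)⟩

end Setoid

theorem IsArcDiagram.arc_setoid [LinearOrder α] {r : α → α → Prop} (h : IsArcDiagram r) :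
    h.setoid.Arc = r := by
  ext i j
  constructor
  · rintro ⟨hij, hs, hmin⟩
    obtain ⟨k, hik, hkj⟩ := (h.reflTransGen_of_join hij.le hs).cases_head.resolve_left hij.ne
    obtain rfl : k = j :=
      le_antisymm (h.le_of_reflTransGen hkj) (hmin k (h.lt hik) ⟨k, .single hik, .refl⟩)
    exact hik
  · intro hr
    refine ⟨h.lt hr, ⟨j, .single hr, .refl⟩, fun k hik hk ↦ ?_⟩
    obtain ⟨j', hij', hj'k⟩ := (h.reflTransGen_of_join hik.le hk).cases_head.resolve_left hik.ne
    exact h.right_unique hr hij' ▸ h.le_of_reflTransGen hj'k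

def Setoid.arcDiagramEquiv [LinearOrder α] [Finite α] :
    Setoid α ≃ {r : α → α → Prop // IsArcDiagram r} where
  toFun s := ⟨s.Arc, s.isArcDiagram_arc⟩
  invFun r := r.2.setoid
  left_inv s := s.isArcDiagram_arc_setoid
  right_inv r := Subtype.ext r.2.arc_setoid

instance Setoid.instFinite [Finite α] : Finite (Setoid α) :=
  Finite.of_injective _ fun _ _ ↦ Setoid.eq_iff_rel_eq.mpr

theorem Fin.castSucc_covBy_succ_iff {m : ℕ} {i j : Fin m} : i.castSucc ⋖ j.succ ↔ i = j := by
  simp [covBy_iff, Nat.covBy_iff_add_one_eq, Fin.ext_iff]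

namespace IsArcDiagram

variable {m : ℕ}

theorem comp_castSucc_succ {r : Fin (m + 1) → Fin (m + 1) → Prop}
    (h : IsArcDiagram r) (hcov : ∀ a b, a ⋖ b → ¬ r a b) :
    IsArcDiagram fun i j : Fin m ↦ r i.castSucc j.succ where
  lt _ _ hij := lt_of_le_of_ne (Fin.castSucc_lt_succ_iff.mp (h.lt hij))
    fun hij' ↦ hcov _ _ (Fin.castSucc_covBy_succ_iff.mpr hij') hij
  right_unique _ _ _ h₁ h₂ := Fin.succ_injective _ (h.right_unique h₁ h₂)
  left_unique _ _ _ h₁ h₂ := Fin.castSucc_injective _ (h.left_unique h₁ h₂)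

theorem map_castSucc_succ {r : Fin m → Fin m → Prop} (h : IsArcDiagram r) :
    IsArcDiagram fun a b ↦ ∃ i j, r i j ∧ i.castSucc = a ∧ j.succ = b where
  lt := by
    rintro _ _ ⟨i, j, hij, rfl, rfl⟩
    exact Fin.castSucc_lt_succ_iff.mpr (h.lt hij).le
  right_unique := by
    rintro _ _ _ ⟨_, _, hij, rfl, rfl⟩ ⟨i', j', hij', hii', rfl⟩
    rw [Fin.castSucc_inj.mp hii'] at hij'
    rw [h.right_unique hij hij']
  left_unique := by
    rintro _ _ _ ⟨_, _, hij, rfl, rfl⟩ ⟨i', j', hij', rfl, hjj'⟩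
    rw [Fin.succ_inj.mp hjj'] at hij'
    rw [h.left_unique hij hij']

end IsArcDiagram

def Fin.arcDiagramShiftEquiv (m : ℕ) :
    {r : {r : Fin (m + 1) → Fin (m + 1) → Prop // IsArcDiagram r} //
      ∀ a b, a ⋖ b → ¬ r.1 a b} ≃
      {r : Fin m → Fin m → Prop // IsArcDiagram r} where
  toFun r := ⟨fun i j ↦ r.1.1 i.castSucc j.succ, r.1.2.comp_castSucc_succ r.2⟩
  invFun r := ⟨⟨_, r.2.map_castSucc_succ⟩, by
    rintro _ _ hcov ⟨i, j, hij, rfl, rfl⟩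
    exact (r.2.lt hij).ne (castSucc_covBy_succ_iff.mp hcov)⟩
  left_inv r := by
    refine Subtype.ext (Subtype.ext ?_)
    ext a b
    refine ⟨fun ⟨i, j, hij, hi, hj⟩ ↦ hi ▸ hj ▸ hij, fun hab ↦ ?_⟩
    have hlt := r.1.2.lt hab
    obtain ⟨i, rfl⟩ := exists_castSucc_eq.mpr (hlt.trans_le (le_last b)).ne
    obtain ⟨j, rfl⟩ := exists_succ_eq.mpr ((zero_le _).trans_lt hlt).ne'
    exact ⟨i, j, hab, rfl, rfl⟩
  right_inv r := by
    refine Subtype.ext ?_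
    ext i j
    simp

theorem Nat.card_subtype_eq_card_and_add_card_and_not [Finite α] (p q : α → Prop) :
    Nat.card {a // p a} = Nat.card {a // p a ∧ q a} + Nat.card {a // p a ∧ ¬ q a} := by
  classical
  rw [← Nat.card_sum]
  exact Nat.card_congr ((Equiv.sumCompl fun a : {a // p a} ↦ q a.1).symm.trans
    (Equiv.sumCongr (Equiv.subtypeSubtypeEquivSubtypeInter p q)
      (Equiv.subtypeSubtypeEquivSubtypeInter p fun a ↦ ¬ q a)))

namespace SimpleGraph

def IsIndepPartition {V : Type*} (G : SimpleGraph V) (s : Setoid V) : Prop :=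
  ∀ a b, s.r a b → ¬ G.Adj a b

variable {V : Type*} {s : Setoid V}

theorem isIndepPartition_hasse_iff [LinearOrder α] (s : Setoid α) :
    (hasse α).IsIndepPartition s ↔ ∀ a b, a ⋖ b → ¬ s.Arc a b := by
  refine ⟨fun h a b hab harc ↦ h a b harc.2.1 (hasse_adj.mpr (.inl hab)),
    fun h a b hs hadj ↦ ?_⟩
  rcases hasse_adj.mp hadj with hab | hba
  · exact h a b hab ((s.arc_iff_of_covBy hab).mpr hs)
  · exact h b a hba ((s.arc_iff_of_covBy hba).mpr (s.symm' hs))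

theorem isIndepPartition_sup {G H : SimpleGraph V} :
    (G ⊔ H).IsIndepPartition s ↔ G.IsIndepPartition s ∧ H.IsIndepPartition s := by
  simp only [IsIndepPartition, sup_adj, not_or]
  exact ⟨fun h ↦ ⟨fun a b hs ↦ (h a b hs).1, fun a b hs ↦ (h a b hs).2⟩,
    fun h a b hs ↦ ⟨h.1 a b hs, h.2 a b hs⟩⟩

theorem isIndepPartition_edge {u v : V} (huv : u ≠ v) :
    (edge u v).IsIndepPartition s ↔ ¬ s u v := by
  refine ⟨fun h hs ↦ h u v hs ((edge_adj ..).mpr ⟨.inl ⟨rfl, rfl⟩, huv⟩), ?_⟩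
  intro h a b hs hadj
  obtain ⟨⟨rfl, rfl⟩ | ⟨rfl, rfl⟩, -⟩ := (edge_adj ..).mp hadj
  · exact h hs
  · exact h (s.symm' hs)

theorem isIndepPartition_pathGraph_iff {n : ℕ} {s : Setoid (Fin (n + 1))} :
    (pathGraph (n + 1)).IsIndepPartition s ↔ ∀ i : Fin n, ¬ s i.castSucc i.succ := by
  refine ⟨fun h i hs ↦ h _ _ hs (pathGraph_adj.mpr (.inl (by simp))), fun h ↦ ?_⟩
  have not_rel {a b : Fin (n + 1)} (hab : a ⋖ b) : ¬ s a b := by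
    replace hab : a.val + 1 = b.val := Nat.covBy_iff_add_one_eq.mp (Fin.covBy_iff.mp hab)
    have ha : a ≠ Fin.last n := Fin.ne_of_val_ne (by rw [Fin.val_last]; omega)
    obtain ⟨i, rfl⟩ := Fin.exists_castSucc_eq.mpr ha
    obtain rfl : b = i.succ := Fin.ext (by simp [← hab])
    exact h i
  intro a b hs hadj
  rcases hasse_adj.mp hadj with hab | hba
  · exact not_rel hab hs
  · exact not_rel hba (s.symm' hs)

theorem cycleGraph_eq_pathGraph_sup_edge (n : ℕ) :
    cycleGraph (n + 2) = pathGraph (n + 2) ⊔ edge (Fin.last (n + 1)) 0 := by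
  have val_sub_eq_one (x y : Fin (n + 2)) :
      ((x - y : Fin (n + 2)) : ℕ) = 1 ↔
        x.val = y.val + 1 ∨ (x.val = 0 ∧ y.val = n + 1) := by
    rcases le_or_gt y x with hyx | hxy
    · rw [Fin.coe_sub_iff_le.mpr hyx]; rw [Fin.le_def] at hyx; omega
    · rw [Fin.coe_sub_iff_lt.mpr hxy]; rw [Fin.lt_def] at hxy; omega
  ext a b
  simp only [sup_adj, edge_adj, cycleGraph_adj', pathGraph_adj, Fin.ext_iff, Fin.val_last,
    Fin.val_zero, val_sub_eq_one]
  omega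

theorem isIndepPartition_cycleGraph_iff {n : ℕ} {s : Setoid (Fin (n + 2))} :
    (cycleGraph (n + 2)).IsIndepPartition s ↔
      (pathGraph (n + 2)).IsIndepPartition s ∧ ¬ s (Fin.last (n + 1)) 0 := by
  rw [cycleGraph_eq_pathGraph_sup_edge, isIndepPartition_sup,
    isIndepPartition_edge Fin.last_pos.ne']

theorem card_isIndepPartition_pathGraph (m : ℕ) :
    Nat.card {s : Setoid (Fin (m + 1)) // (pathGraph (m + 1)).IsIndepPartition s} =
      bell m :=
  Nat.card_congr <| (Setoid.arcDiagramEquiv.subtypeEquiv fun s ↦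
    isIndepPartition_hasse_iff s).trans <|
    (Fin.arcDiagramShiftEquiv m).trans Setoid.arcDiagramEquiv.symm

def contractLastZeroEquiv (n : ℕ) :
    {s : Setoid (Fin (n + 3)) // (pathGraph (n + 3)).IsIndepPartition s ∧ s (Fin.last _) 0} ≃
      {s : Setoid (Fin (n + 2)) // (cycleGraph (n + 2)).IsIndepPartition s} where
  toFun s := ⟨s.1.comap Fin.castSucc, by
    obtain ⟨s, hpath, hlast⟩ := s
    rw [isIndepPartition_pathGraph_iff] at hpath
    rw [isIndepPartition_cycleGraph_iff, isIndepPartition_pathGraph_iff]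
    refine ⟨fun i ↦ ?_, fun hs ↦ ?_⟩
    · simpa [Setoid.comap_rel, Fin.castSucc_succ] using hpath i.castSucc
    · exact hpath (Fin.last _) (by simpa [Setoid.comap_rel] using s.trans' hs (s.symm' hlast))⟩
  invFun s := ⟨s.1.comap (Fin.lastCases 0 id), by
    obtain ⟨s, hcycle⟩ := s
    rw [isIndepPartition_cycleGraph_iff, isIndepPartition_pathGraph_iff] at hcycle
    obtain ⟨hpath, hlast⟩ := hcycle
    refine ⟨isIndepPartition_pathGraph_iff.mpr fun i ↦ ?_, ?_⟩
    · induction i using Fin.lastCases with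
      | last => simpa [Setoid.comap_rel] using hlast
      | cast j =>
        rw [Setoid.comap_rel, Fin.succ_castSucc, Fin.lastCases_castSucc, Fin.lastCases_castSucc]
        exact hpath j
    · rw [Setoid.comap_rel, Fin.lastCases_last, ← Fin.castSucc_zero' (n := n + 2),
        Fin.lastCases_castSucc]
      exact s.refl' 0⟩
  left_inv s := by
    obtain ⟨s, -, hlast⟩ := s
    have rel_self (x : Fin (n + 3)) : s (Fin.castSucc (Fin.lastCases 0 id x)) x := by
      induction x using Fin.lastCases with
      | last => simpa using s.symm' hlast
      | cast j => simp
    ext x y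
    simp only [Setoid.comap_rel]
    exact ⟨fun h ↦ s.trans' (s.symm' (rel_self x)) (s.trans' h (rel_self y)),
      fun h ↦ s.trans' (rel_self x) (s.trans' h (s.symm' (rel_self y)))⟩
  right_inv s := by
    ext x y
    simp [Setoid.comap_rel]

theorem card_isIndepPartition_cycleGraph_succ_add (n : ℕ) :
    Nat.card {s : Setoid (Fin (n + 3)) // (cycleGraph (n + 3)).IsIndepPartition s} +
      Nat.card {s : Setoid (Fin (n + 2)) // (cycleGraph (n + 2)).IsIndepPartition s} =
        bell (n + 2) := by
  calc _ = Nat.card {s : Setoid (Fin (n + 3)) //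
          (pathGraph (n + 3)).IsIndepPartition s ∧ ¬ s (Fin.last _) 0} +
        Nat.card {s : Setoid (Fin (n + 3)) //
          (pathGraph (n + 3)).IsIndepPartition s ∧ s (Fin.last _) 0} := by
        rw [Nat.card_congr (contractLastZeroEquiv n), Nat.card_congr
          (Equiv.subtypeEquivRight fun s ↦ isIndepPartition_cycleGraph_iff)]
    _ = bell (n + 2) := by
      rw [add_comm, ← Nat.card_subtype_eq_card_and_add_card_and_not]
      exact card_isIndepPartition_pathGraph (n + 2)

end SimpleGraph

theorem Finset.sum_Icc_one_neg_one_pow_sub_mul_succ {R : Type*} [CommRing R] (f : ℕ → R)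
    (n : ℕ) :
    ∑ j ∈ Finset.Icc 1 (n + 1), (-1) ^ (n + 1 - j) * f j =
      f (n + 1) - ∑ j ∈ Finset.Icc 1 n, (-1) ^ (n - j) * f j := by
  rw [Finset.sum_Icc_succ_top (by omega), Nat.sub_self, pow_zero, one_mul, sub_eq_add_neg,
    add_comm, ← Finset.sum_neg_distrib]
  congr 1
  refine Finset.sum_congr rfl fun j hj ↦ ?_
  rw [Nat.sub_add_comm (Finset.mem_Icc.mp hj).2, pow_succ]
  ring

/-- For `n ≥ 3`, the number of partitions of the vertex set of the cycle
graph `C_n` into independent sets equals the alternating sum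
`B_{n-1} - B_{n-2} + ⋯ + (-1)^n B_1`. -/
theorem cycle_indep_partitions_eq_alternating_bell (n : ℕ) (hn : 3 ≤ n) :
    (Nat.card {st : Setoid (Fin n) //
        ∀ a b, st.r a b → ¬ (SimpleGraph.cycleGraph n).Adj a b} : ℤ) =
      ∑ j ∈ Finset.Icc 1 (n - 1), (-1 : ℤ) ^ (n - 1 - j) * (bell j : ℤ) := by
  obtain ⟨m, rfl⟩ : ∃ m, n = m + 2 := ⟨n - 2, by omega⟩
  clear hn
  change (Nat.card {s // (cycleGraph (m + 2)).IsIndepPartition s} : ℤ) =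
    ∑ j ∈ Finset.Icc 1 (m + 1), (-1) ^ (m + 1 - j) * (bell j : ℤ)
  induction m with
  | zero =>
    rw [cycleGraph_two_eq_top, ← pathGraph_two_eq_top, card_isIndepPartition_pathGraph]
    simp
  | succ m ih =>
    rw [Finset.sum_Icc_one_neg_one_pow_sub_mul_succ, ← ih,
      ← card_isIndepPartition_cycleGraph_succ_add]
    push_cast
    ring
end
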